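/- arXiv:2209.09182 — 4 statements merged into one kernel-verified Lean document; each statement's English description precedes it below -/
import Mathlib

section
/- (Liouville bound of Mahler) Let p be a prime, F an algebraic closure of ZMod p, K = RatFunc F, and K̄ an algebraic closure of K. Let α ∈ K̄ not lie in the image of K, set n = natDegree(minpoly K α), and let w be a nonarchimedean absolute value on K̄ extending the infinite place of K. Then there exists a constant C ∈ ℝ such that for all r ∈ K: −log(w(α − algebraMap K K̄ r))/log p ≤ n·h(r) + C. -/
open Polynomial

noncomputable section

/-- The degree of a rational function; for an element `r` of a rational function field this
is also its height `h(r) = max (natDegree (num r)) (natDegree (denom r))`. -/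
def rfDeg {K : Type*} [Field K] (φ : RatFunc K) : ℕ :=
  max φ.num.natDegree φ.denom.natDegree

/-- Composition of rational functions: `rfComp ψ χ = ψ ∘ χ`, obtained by evaluating `ψ` at `χ`
via the constant embedding. -/
def rfComp {K : Type*} [Field K] (ψ χ : RatFunc K) : RatFunc K :=
  RatFunc.eval (RatFunc.C) χ ψ

/-- Iterates of a rational function: `Φ_0 = X`, `Φ_1 = φ`, `Φ_{m+1} = φ ∘ Φ_m`. -/
def rfIter {K : Type*} [Field K] (φ : RatFunc K) : ℕ → RatFunc K
  | 0 => RatFunc.X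
  | m + 1 => rfComp φ (rfIter φ m)

/-- `γ ∈ K` is not post-critical for `φ`: for every `m ≥ 1` the numerator of `Φ_m - γ`
is separable of degree at least `d(φ)^m - 1`. -/
def NotPostCritical {K : Type*} [Field K] (φ : RatFunc K) (γ : K) : Prop :=
  ∀ m : ℕ, 1 ≤ m →
    ((rfIter φ m - RatFunc.C γ).num.Separable ∧
      rfDeg φ ^ m - 1 ≤ (rfIter φ m - RatFunc.C γ).num.natDegree)

/-- Coefficientwise image of a rational function under a field embedding `g`. -/
def rfMap {K L : Type*} [Field K] [Field L] (g : K →+* L) (φ : RatFunc K) : RatFunc L :=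
  algebraMap (Polynomial L) (RatFunc L) (φ.num.map g) /
    algebraMap (Polynomial L) (RatFunc L) (φ.denom.map g)

/-- `x` is algebraic over `k`, where `k` maps into the ambient ring via `f`. -/
def IsAlgebraicVia {k L : Type*} [CommRing k] [CommRing L] (f : k →+* L) (x : L) : Prop :=
  ∃ q : Polynomial k, q ≠ 0 ∧ Polynomial.eval₂ f x q = 0

/-- `φ ∈ K(z)` is isotrivial relative to the constant field `k`, where `f : k →+* K̄` and
`g : K →+* K̄` are the embeddings into an algebraic closure of `K`: there are degree-one
`μ, ν ∈ K̄(z)`, inverse to each other, such that all coefficients of the numerator and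
denominator of `ν ∘ φ̄ ∘ μ` are algebraic over `k`. -/
def Isotrivial {k K Kbar : Type*} [Field k] [Field K] [Field Kbar]
    (f : k →+* Kbar) (g : K →+* Kbar) (φ : RatFunc K) : Prop :=
  ∃ μ ν : RatFunc Kbar, rfDeg μ = 1 ∧ rfDeg ν = 1 ∧
    rfComp ν μ = RatFunc.X ∧ rfComp μ ν = RatFunc.X ∧
    (∀ i : ℕ, IsAlgebraicVia f ((rfComp ν (rfComp (rfMap g φ) μ)).num.coeff i)) ∧
    (∀ i : ℕ, IsAlgebraicVia f ((rfComp ν (rfComp (rfMap g φ) μ)).denom.coeff i))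

/-- An algebraic closure of `𝔽_p = ZMod p`. -/
abbrev Fp (p : ℕ) [Fact p.Prime] : Type := AlgebraicClosure (ZMod p)

/-- The rational function field `K = 𝔽̄_p(t)`. -/
abbrev Kp (p : ℕ) [Fact p.Prime] : Type := RatFunc (Fp p)

/-- The embedding `ZMod p →+* K̄` for `K̄` an algebraic closure of `Kp p`. -/
def constEmb (p : ℕ) [Fact p.Prime] (Kbar : Type*) [Field Kbar] [Algebra (Kp p) Kbar] :
    ZMod p →+* Kbar :=
  (algebraMap (Kp p) Kbar).comp ((RatFunc.C : Fp p →+* Kp p).comp (algebraMap (ZMod p) (Fp p)))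

end

/-! Let `f` be the minimal polynomial of `α`; it is irreducible of degree `n ≥ 2`, so
`f(r) ≠ 0` for all `r ∈ K`. Clearing the denominators of the coefficients of `f` (a polynomial
of degree `B`) and of `r` exhibits `f(r)` as a polynomial divided by one of degree at most
`B + n h(r)`, whence `w(f(r)) = p ^ intDegree (f(r)) ≥ p ^ (-(B + n h(r)))`. On the other
hand `f = (X - α) g` over `K̄` with `g` bounded on the unit ball around `α`, so
`w(f(r)) ≤ M w(α - r)` once `w(α - r) ≤ 1`. Taking logarithms gives the bound. -/

open IsLocalization

namespace AbsoluteValue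

variable {R : Type*} [CommRing R] [IsDomain R] (w : AbsoluteValue R ℝ)

lemma eval_le_of_le (Q : R[X]) {ρ : R} {c : ℝ} (hρ : w ρ ≤ c) :
    w (Q.eval ρ) ≤ ∑ i ∈ Finset.range (Q.natDegree + 1), w (Q.coeff i) * c ^ i := by
  rw [eval_eq_sum_range]
  refine (w.sum_le _ _).trans (Finset.sum_le_sum fun i _ => ?_)
  rw [map_mul, map_pow]
  gcongr

lemma exists_eval_le_mul_of_isRoot {P : R[X]} {α : R} (hα : P.IsRoot α) :
    ∃ M ≥ 1, ∀ ρ, w (ρ - α) ≤ 1 → w (P.eval ρ) ≤ M * w (ρ - α) := by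
  set Q := P /ₘ (X - C α)
  set S := ∑ i ∈ Finset.range (Q.natDegree + 1), w (Q.coeff i) * (w α + 1) ^ i
  have hS : 0 ≤ S := Finset.sum_nonneg fun i _ => by positivity
  refine ⟨S + 1, by linarith, fun ρ hρ => ?_⟩
  have hρα : w ρ ≤ w α + 1 := by
    calc w ρ = w ((ρ - α) + α) := by rw [sub_add_cancel]
      _ ≤ w (ρ - α) + w α := w.add_le _ _
      _ ≤ w α + 1 := by linarith
  calc w (P.eval ρ) = w (ρ - α) * w (Q.eval ρ) := by
        rw [← mul_divByMonic_eq_iff_isRoot.mpr hα, eval_mul, map_mul]; simp [Q]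
    _ ≤ w (ρ - α) * S := by gcongr; exact w.eval_le_of_le Q hρα
    _ ≤ (S + 1) * w (ρ - α) := by nlinarith [w.nonneg (ρ - α)]

end AbsoluteValue

namespace RatFunc

variable {F : Type*} [Field F]

lemma num_eq_mul_denom (r : RatFunc F) :
    algebraMap F[X] (RatFunc F) r.num = r * algebraMap F[X] (RatFunc F) r.denom := by
  rw [← div_eq_iff (algebraMap_ne_zero r.denom_ne_zero), num_div_denom]

lemma intDegree_nonneg_of_isInteger {x : RatFunc F} (hx : IsInteger F[X] x) :
    0 ≤ x.intDegree := by
  obtain ⟨P, rfl⟩ := hx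
  rw [intDegree_polynomial]
  exact Int.natCast_nonneg _

lemma isInteger_smul_eval_mul_denom_pow (f : (RatFunc F)[X]) {b : F[X]}
    (hb : ∀ i ∈ Finset.range (f.natDegree + 1), IsInteger F[X] (b • f.coeff i))
    (r : RatFunc F) :
    IsInteger F[X] (b • f.eval r * algebraMap F[X] (RatFunc F) r.denom ^ f.natDegree) := by
  rw [eval_eq_sum_range, Finset.smul_sum, Finset.sum_mul]
  refine Subsemiring.sum_mem _ fun i hi => ?_
  have hle : i ≤ f.natDegree := Nat.lt_succ_iff.mp (Finset.mem_range.mp hi)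
  have : b • (f.coeff i * r ^ i) * algebraMap F[X] (RatFunc F) r.denom ^ f.natDegree =
      b • f.coeff i * algebraMap F[X] (RatFunc F) (r.num ^ i * r.denom ^ (f.natDegree - i)) := by
    rw [← pow_mul_pow_sub _ hle, map_mul, map_pow, map_pow, num_eq_mul_denom, Algebra.smul_def,
      Algebra.smul_def]
    ring
  rw [this]
  exact isInteger_mul (hb i hi) ⟨_, rfl⟩

lemma exists_neg_le_intDegree_eval (f : (RatFunc F)[X]) :
    ∃ B : ℕ, ∀ r : RatFunc F, f.eval r ≠ 0 →
      -((B : ℤ) + f.natDegree * rfDeg r) ≤ (f.eval r).intDegree := by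
  obtain ⟨⟨b, hb⟩, hint⟩ :=
    exist_integer_multiples (nonZeroDivisors F[X]) (Finset.range (f.natDegree + 1)) f.coeff
  have hb0 : algebraMap F[X] (RatFunc F) b ≠ 0 :=
    algebraMap_ne_zero (nonZeroDivisors.ne_zero hb)
  refine ⟨b.natDegree, fun r hr => ?_⟩
  have hden : algebraMap F[X] (RatFunc F) r.denom ^ f.natDegree ≠ 0 :=
    pow_ne_zero _ (algebraMap_ne_zero r.denom_ne_zero)
  have hnonneg := intDegree_nonneg_of_isInteger (isInteger_smul_eval_mul_denom_pow f hint r)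
  rw [Algebra.smul_def, intDegree_mul (mul_ne_zero hb0 hr) hden, intDegree_mul hb0 hr,
    ← map_pow, intDegree_polynomial, intDegree_polynomial, natDegree_pow] at hnonneg
  have hdenom : r.denom.natDegree ≤ rfDeg r := le_max_right _ _
  have : (f.natDegree : ℤ) * r.denom.natDegree ≤ f.natDegree * rfDeg r := by gcongr
  push_cast at hnonneg
  linarith

end RatFunc

lemma minpoly.eval_ne_zero_of_notMem_range {K L : Type*} [Field K] [Field L] [Algebra K L]
    {α : L} (hint : IsIntegral K α) (hα : α ∉ Set.range (algebraMap K L)) (r : K) :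
    (minpoly K α).eval r ≠ 0 := fun h => by
  have h1 : (minpoly K α).natDegree = 1 := natDegree_eq_of_degree_eq_some
    (degree_eq_one_of_irreducible_of_root (minpoly.irreducible hint) h)
  have h2 := (minpoly.two_le_natDegree_iff hint).mpr hα
  omega

lemma neg_log_div_log_le_of_zpow_le {b x M : ℝ} {N : ℤ} (hb : 1 < b) (hx : 0 < x) (hM : 0 < M)
    (h : b ^ (-N) ≤ M * x) : -Real.log x / Real.log b ≤ N + Real.log M / Real.log b := by
  have hlogb : 0 < Real.log b := Real.log_pos hb
  have hlog := Real.log_le_log (zpow_pos (by linarith) _) h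
  rw [Real.log_zpow, Real.log_mul hM.ne' hx.ne'] at hlog
  rw [div_le_iff₀ hlogb, add_mul, div_mul_cancel₀ _ hlogb.ne']
  push_cast at hlog
  linarith

theorem liouville_bound_general
    (p : ℕ) [Fact p.Prime]
    (Kbar : Type) [Field Kbar] [Algebra (Kp p) Kbar] [IsAlgClosure (Kp p) Kbar]
    (α : Kbar) (hα : α ∉ Set.range (algebraMap (Kp p) Kbar))
    (n : ℕ) (hn : (minpoly (Kp p) α).natDegree = n)
    (w : AbsoluteValue Kbar ℝ)
    (hext : ∀ r : Kp p, r ≠ 0 → w (algebraMap (Kp p) Kbar r) = (p : ℝ) ^ r.intDegree) :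
    ∃ C : ℝ, ∀ r : Kp p,
      -Real.log (w (α - algebraMap (Kp p) Kbar r)) / Real.log p ≤
        (n : ℝ) * (rfDeg r : ℝ) + C := by
  set ι := algebraMap (Kp p) Kbar
  have hint : IsIntegral (Kp p) α := (IsAlgClosure.isAlgebraic.isAlgebraic α).isIntegral
  set f := minpoly (Kp p) α
  obtain ⟨B, hB⟩ := RatFunc.exists_neg_le_intDegree_eval f
  have hroot : (f.map ι).IsRoot α := by rw [IsRoot, eval_map, ← aeval_def, minpoly.aeval]
  obtain ⟨M, hM1, hM⟩ := w.exists_eval_le_mul_of_isRoot hroot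
  have hp : (1 : ℝ) < p := by exact_mod_cast (Fact.out : p.Prime).one_lt
  have hlogp := Real.log_nonneg hp.le
  refine ⟨B + Real.log M / Real.log p, fun r => ?_⟩
  by_cases hfar : 1 ≤ w (α - ι r)
  · have hlogM : 0 ≤ Real.log M / Real.log p := div_nonneg (Real.log_nonneg hM1) hlogp
    calc _ ≤ (0 : ℝ) :=
          div_nonpos_of_nonpos_of_nonneg (neg_nonpos.mpr (Real.log_nonneg hfar)) hlogp
      _ ≤ _ := by positivity
  have hfr := minpoly.eval_ne_zero_of_notMem_range hint hα r
  have key : (p : ℝ) ^ (-((B : ℤ) + n * rfDeg r)) ≤ M * w (α - ι r) :=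
    calc (p : ℝ) ^ (-((B : ℤ) + n * rfDeg r)) ≤ (p : ℝ) ^ (f.eval r).intDegree :=
          zpow_le_zpow_right₀ hp.le (hn ▸ hB r hfr)
      _ = w ((f.map ι).eval (ι r)) := by rw [eval_map, eval₂_hom, hext _ hfr]
      _ ≤ M * w (α - ι r) := by
          rw [w.map_sub]
          exact hM _ (by rw [w.map_sub]; exact (not_le.mp hfar).le)
  have hne : α - ι r ≠ 0 := sub_ne_zero.mpr fun h => hα ⟨r, h.symm⟩
  have := neg_log_div_log_le_of_zpow_le hp (w.pos hne) (by linarith) key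
  push_cast at this
  linarith

/-- **Theorem (Liouville bound of Mahler).** -/
theorem liouville_bound
    (p : ℕ) [Fact p.Prime]
    (Kbar : Type) [Field Kbar] [Algebra (Kp p) Kbar] [IsAlgClosure (Kp p) Kbar]
    (α : Kbar) (hα : α ∉ Set.range (algebraMap (Kp p) Kbar))
    (n : ℕ) (hn : (minpoly (Kp p) α).natDegree = n)
    (w : AbsoluteValue Kbar ℝ)
    (hna : ∀ x y : Kbar, w (x + y) ≤ max (w x) (w y))
    (hext : ∀ r : Kp p, r ≠ 0 → w (algebraMap (Kp p) Kbar r) = (p : ℝ) ^ r.intDegree) :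
    ∃ C : ℝ, ∀ r : Kp p,
      -Real.log (w (α - algebraMap (Kp p) Kbar r)) / Real.log p ≤
        (n : ℝ) * (rfDeg r : ℝ) + C :=
  liouville_bound_general p Kbar α hα n hn w hext
end

section
/- Let p be a prime, F an algebraic closure of ZMod p, K = RatFunc F, and let L be a field extension of K with L finite-dimensional over K (a function field over F). If κ ∈ L is such that for every n ≥ 1 there exists x ∈ L with x^{p^n} = κ, then κ is algebraic over ZMod p (i.e., κ lies in the algebraic closure of the prime field inside L). -/
open Polynomial

/-!
Suppose `κ` were transcendental over `F`. A function field in one variable has transcendence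
degree one, so `κ` alone is a transcendence basis and `L` is a finite extension of `F⟮κ⟯`.
But a root `x` of `X ^ m - κ` is transcendental too, and `F⟮x⟯ ≅ F(X)` is an extension of
degree `m` of `F⟮x ^ m⟯ = F⟮κ⟯` (the degree of the rational function `X ^ m`), so
`m ≤ [L : F⟮κ⟯]` for arbitrarily large `m`. Algebraicity over `F = 𝔽̄_p` then descends to `𝔽_p`.
-/

open IntermediateField

section TranscendenceDegreeOne

variable {F L : Type*} [Field F] [Field L] [Algebra F L]

theorem IntermediateField.relfinrank_adjoin_pow {x : L} (hx : Transcendental F x) (m : ℕ) :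
    relfinrank F⟮x ^ m⟯ F⟮x⟯ = m := by
  let φ : RatFunc F →ₐ[F] L := F⟮x⟯.val.comp (RatFunc.algEquivOfTranscendental x hx).toAlgHom
  have hφ : φ RatFunc.X = x := by simp [φ]
  have key := relfinrank_map_map (A := F⟮(RatFunc.X : RatFunc F) ^ m⟯) (B := F⟮RatFunc.X⟯) φ
  rw [adjoin_map, adjoin_map, Set.image_singleton, Set.image_singleton, map_pow, hφ,
    RatFunc.adjoin_X, relfinrank_top_right, RatFunc.finrank_eq_max_natDegree,
    ← RatFunc.algebraMap_X, ← map_pow, RatFunc.num_algebraMap, RatFunc.denom_algebraMap] at key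
  simpa using key

theorem IntermediateField.le_finrank_adjoin_pow {x : L} (hx : Transcendental F x) (m : ℕ)
    [FiniteDimensional F⟮x ^ m⟯ L] : m ≤ Module.finrank F⟮x ^ m⟯ L := by
  have hle : F⟮x ^ m⟯ ≤ F⟮x⟯ := adjoin_simple_le_iff.mpr (pow_mem (mem_adjoin_simple_self F x) m)
  have := Nat.le_of_dvd Module.finrank_pos (relfinrank_dvd_finrank_top_of_le hle)
  rwa [relfinrank_adjoin_pow hx m] at this

theorem Transcendental.isTranscendenceBasis_of_trdeg_le_one {κ : L} (hκ : Transcendental F κ)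
    (htr : Algebra.trdeg F L ≤ 1) : IsTranscendenceBasis F fun _ : Unit => κ :=
  (algebraicIndependent_unique_type_iff.mpr hκ).isTranscendenceBasis_of_lift_trdeg_le_of_finite
    (by simpa using htr)

theorem IsTranscendenceBasis.finiteDimensional_adjoin [Algebra.EssFiniteType F L] {ι : Type*}
    {x : ι → L} (hx : IsTranscendenceBasis F x) :
    FiniteDimensional (adjoin F (Set.range x)) L :=
  have := hx.isAlgebraic_field
  have := Algebra.EssFiniteType.of_comp F (adjoin F (Set.range x)) L
  Algebra.finite_of_essFiniteType_of_isAlgebraic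

theorem isAlgebraic_of_forall_exists_pow_eq [Algebra.EssFiniteType F L]
    (htr : Algebra.trdeg F L ≤ 1) {κ : L} (h : ∀ N : ℕ, ∃ m > N, ∃ x : L, x ^ m = κ) :
    IsAlgebraic F κ := by
  by_contra (hκ : Transcendental F κ)
  have := (hκ.isTranscendenceBasis_of_trdeg_le_one htr).finiteDimensional_adjoin
  rw [Set.range_const] at this
  obtain ⟨m, hm, x, rfl⟩ := h (Module.finrank F⟮κ⟯ L)
  have hx : Transcendental F x := fun hx ↦ hκ (hx.pow m)
  exact hm.not_ge (le_finrank_adjoin_pow hx m)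

end TranscendenceDegreeOne

section RatFunc

variable (F : Type*) [Field F]

theorem RatFunc.isTranscendenceBasis_X :
    IsTranscendenceBasis F fun _ : Unit => (RatFunc.X : RatFunc F) := by
  have := IsLocalization.isAlgebraic (RatFunc F) (nonZeroDivisors F[X])
  simpa [Function.comp_def] using
    (IsTranscendenceBasis.polynomial Unit F).algebraMap_comp (A := RatFunc F)

instance RatFunc.essFiniteType : Algebra.EssFiniteType F (RatFunc F) :=
  have := Algebra.EssFiniteType.of_isLocalization (RatFunc F) (nonZeroDivisors F[X])
  Algebra.EssFiniteType.comp F F[X] (RatFunc F)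

theorem trdeg_eq_one_of_isAlgebraic_ratFunc (L : Type*) [Field L] [Algebra F L]
    [Algebra (RatFunc F) L] [IsScalarTower F (RatFunc F) L] [Algebra.IsAlgebraic (RatFunc F) L] :
    Algebra.trdeg F L = 1 := by
  simpa using
    ((RatFunc.isTranscendenceBasis_X F).algebraMap_comp (A := L)).lift_cardinalMk_eq_trdeg.symm

end RatFunc

/-- **Theorem (elements with all `pⁿ`-th roots in a function field are constants).** -/
theorem algebraic_of_all_p_power_roots
    (p : ℕ) [Fact p.Prime]
    (L : Type) [Field L] [Algebra (Kp p) L] [FiniteDimensional (Kp p) L]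
    (κ : L)
    (h : ∀ n : ℕ, 1 ≤ n → ∃ x : L, x ^ (p ^ n) = κ) :
    IsAlgebraicVia
      ((algebraMap (Kp p) L).comp
        ((RatFunc.C : Fp p →+* Kp p).comp (algebraMap (ZMod p) (Fp p)))) κ := by
  let : Algebra (Fp p) L := ((algebraMap (Kp p) L).comp RatFunc.C).toAlgebra
  have : IsScalarTower (Fp p) (Kp p) L := .of_algebraMap_eq' rfl
  have := Algebra.EssFiniteType.comp (Fp p) (Kp p) L
  have hunbounded : ∀ N : ℕ, ∃ m > N, ∃ x : L, x ^ m = κ := fun N ↦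
    ⟨p ^ (N + 1), (Nat.lt_succ_self N).trans (Nat.lt_pow_self (Fact.out : p.Prime).one_lt),
      h (N + 1) N.succ_pos⟩
  have hκ : IsAlgebraic (Fp p) κ := isAlgebraic_of_forall_exists_pow_eq
    (trdeg_eq_one_of_isAlgebraic_ratFunc (Fp p) L).le hunbounded
  let : Algebra (ZMod p) L := ((algebraMap (Fp p) L).comp (algebraMap (ZMod p) (Fp p))).toAlgebra
  have : IsScalarTower (ZMod p) (Fp p) L := .of_algebraMap_eq' rfl
  exact hκ.restrictScalars (ZMod p)
end

section
/- (Cross-ratios of solutions of a common Riccati equation are constant) Let L be a field equipped with a derivation D : L → L (an additive map satisfying the Leibniz rule D(xy) = x·D(y) + y·D(x)). Let a, b, c ∈ L and let α₁, α₂, α₃, α₄ ∈ L be pairwise distinct elements each satisfying D(αᵢ) = a·αᵢ² + b·αᵢ + c. Then D( ((α₁ − α₄)·(α₂ − α₃)) / ((α₁ − α₃)·(α₂ − α₄)) ) = 0. -/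
/-- **Theorem (cross-ratios of solutions of a common Riccati equation are constant).** -/
theorem crossRatio_derivation_eq_zero
    (L : Type) [Field L] (D : Derivation ℤ L L) (a b c : L)
    (α₁ α₂ α₃ α₄ : L)
    (h12 : α₁ ≠ α₂) (h13 : α₁ ≠ α₃) (h14 : α₁ ≠ α₄)
    (h23 : α₂ ≠ α₃) (h24 : α₂ ≠ α₄) (h34 : α₃ ≠ α₄)
    (hα₁ : D α₁ = a * α₁ ^ 2 + b * α₁ + c)
    (hα₂ : D α₂ = a * α₂ ^ 2 + b * α₂ + c)
    (hα₃ : D α₃ = a * α₃ ^ 2 + b * α₃ + c)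
    (hα₄ : D α₄ = a * α₄ ^ 2 + b * α₄ + c) :
    D (((α₁ - α₄) * (α₂ - α₃)) / ((α₁ - α₃) * (α₂ - α₄))) = 0 := by
  rw [Derivation.leibniz_div, smul_eq_mul, smul_eq_mul, smul_eq_mul]
  have key : ((α₁ - α₃) * (α₂ - α₄)) * D ((α₁ - α₄) * (α₂ - α₃)) -
      ((α₁ - α₄) * (α₂ - α₃)) * D ((α₁ - α₃) * (α₂ - α₄)) = 0 := by
    simp only [Derivation.leibniz, map_sub, hα₁, hα₂, hα₃, hα₄, smul_eq_mul]
    ring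
  rw [key, mul_zero]
end

section
/- Let K be a field with algebraic closure K̄, and let S be a finite subset of K̄ such that: every α ∈ S is separable over K (its minimal polynomial over K is separable); S is stable under every K-algebra automorphism of K̄ (σ(α) ∈ S for all σ : K̄ ≃ₐ[K] K̄ and α ∈ S); and there is N ∈ ℕ with |S| ≤ N such that 2·natDegree(minpoly K α) > N for every α ∈ S. Then the automorphism group acts transitively on S: for all α, β ∈ S there exists a K-algebra automorphism σ of K̄ with σ(α) = β. -/
/-!
The orbit of `α` under `Gal(K̄/K)` is the set of roots of its minimal polynomial, which for
separable `α` has `natDegree (minpoly K α)` elements. Two orbits contained in `S`, each of size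
more than `N / 2 ≥ |S| / 2`, cannot be disjoint, so they coincide.
-/

open Polynomial MulAction

theorem MulAction.mem_orbit_of_ncard_lt_add {G X : Type*} [Group G] [MulAction G X] {S : Set X}
    (hS : S.Finite) (hstab : ∀ g : G, ∀ x ∈ S, g • x ∈ S) {a b : X} (ha : a ∈ S) (hb : b ∈ S)
    (hcard : S.ncard < (orbit G a).ncard + (orbit G b).ncard) : b ∈ orbit G a := by
  have orbit_subset : ∀ x ∈ S, orbit G x ⊆ S := by
    rintro x hx _ ⟨g, rfl⟩
    exact hstab g x hx
  obtain ⟨c, hca, hcb⟩ : (orbit G a ∩ orbit G b).Nonempty := by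
    rw [← Set.not_disjoint_iff_nonempty_inter]
    intro hdisj
    have hunion := Set.ncard_union_eq hdisj (hS.subset (orbit_subset a ha))
      (hS.subset (orbit_subset b hb))
    have hle := Set.ncard_le_ncard (Set.union_subset (orbit_subset a ha) (orbit_subset b hb)) hS
    omega
  rw [← orbit_eq_iff.mpr hca, orbit_eq_iff.mpr hcb]
  exact mem_orbit_self b

section Galois

variable {K L : Type*} [Field K] [Field L] [Algebra K L] [Normal K L]

theorem Normal.orbit_eq_rootSet_minpoly (α : L) :
    orbit Gal(L/K) α = (minpoly K α).rootSet L := by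
  ext x
  rw [mem_rootSet_of_ne (minpoly.ne_zero (Algebra.IsIntegral.isIntegral α))]
  constructor
  · rintro ⟨σ, rfl⟩
    exact minpoly.aeval_algHom _ (σ : L →ₐ[K] L) α
  · exact minpoly.exists_algEquiv_of_root' (Algebra.IsAlgebraic.isAlgebraic α)

theorem Normal.ncard_orbit_eq_natDegree_minpoly {α : L} (hsep : (minpoly K α).Separable) :
    (orbit Gal(L/K) α).ncard = (minpoly K α).natDegree := by
  classical
  rw [Normal.orbit_eq_rootSet_minpoly, Set.ncard_eq_toFinset_card',
    Set.toFinset_card, card_rootSet_eq_natDegree hsep (Normal.splits' α)]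

end Galois

/-- **Theorem (Galois acts transitively on stable sets of separable elements of large
degree).** -/
theorem galois_transitive_of_large_degree
    (K : Type) [Field K] (S : Finset (AlgebraicClosure K))
    (hsep : ∀ α ∈ S, (minpoly K α).Separable)
    (hstab : ∀ σ : AlgebraicClosure K ≃ₐ[K] AlgebraicClosure K, ∀ α ∈ S, σ α ∈ S)
    (N : ℕ) (hcard : S.card ≤ N)
    (hdeg : ∀ α ∈ S, N < 2 * (minpoly K α).natDegree) :
    ∀ α ∈ S, ∀ β ∈ S, ∃ σ : AlgebraicClosure K ≃ₐ[K] AlgebraicClosure K, σ α = β := by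
  intro α hα β hβ
  have hlarge : ∀ γ ∈ S, N < 2 * (orbit Gal(AlgebraicClosure K/K) γ).ncard := fun γ hγ ↦
    Normal.ncard_orbit_eq_natDegree_minpoly (hsep γ hγ) ▸ hdeg γ hγ
  have hα' := hlarge α hα
  have hβ' := hlarge β hβ
  exact mem_orbit_of_ncard_lt_add S.finite_toSet hstab hα hβ (by rw [Set.ncard_coe_finset]; omega)
end
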